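/- In characteristic 2, every bialgebra structure on the trigonometric coalgebra C_k satisfies c² = c + λs, cs = sc = λs, s² = (λ+1)s for some λ ∈ k; in particular bialgebra multiplication laws on C_k are in bijection with elements of k. -/

import Mathlib

open TensorProduct

/-- basis vector `c` of the trigonometric coalgebra -/
def trigC (k : Type*) [Field k] : k × k := (1, 0)
/-- basis vector `s` of the trigonometric coalgebra -/
def trigS (k : Type*) [Field k] : k × k := (0, 1)

/-- comultiplication of the trigonometric coalgebra:
`Δ(c) = c⊗c - s⊗s`, `Δ(s) = s⊗c + c⊗s`. -/
noncomputable def trigComul (k : Type*) [Field k] :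
    (k × k) →ₗ[k] (k × k) ⊗[k] (k × k) :=
  (LinearMap.fst k k k).smulRight (trigC k ⊗ₜ trigC k - trigS k ⊗ₜ trigS k) +
  (LinearMap.snd k k k).smulRight (trigS k ⊗ₜ trigC k + trigC k ⊗ₜ trigS k)

/-- counit of the trigonometric coalgebra: `ε(c) = 1`, `ε(s) = 0`. -/
def trigCounit (k : Type*) [Field k] : (k × k) →ₗ[k] k := LinearMap.fst k k k

/-- A bialgebra structure on a fixed `k`-coalgebra `(V, Δ, ε)`: an associative
unital `k`-bilinear multiplication for which `Δ` and `ε` are algebra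
homomorphisms (the multiplication on `V ⊗ V` being the componentwise one). -/
structure BialgebraStructure (k V : Type*) [CommRing k] [AddCommGroup V] [Module k V]
    (Δ : V →ₗ[k] V ⊗[k] V) (ε : V →ₗ[k] k) where
  mul : V →ₗ[k] V →ₗ[k] V
  one : V
  mul_assoc : ∀ x y z : V, mul (mul x y) z = mul x (mul y z)
  one_mul : ∀ x : V, mul one x = x
  mul_one : ∀ x : V, mul x one = x
  comul_one : Δ one = one ⊗ₜ[k] one
  comul_mul : ∀ x y : V, Δ (mul x y) = TensorProduct.map₂ mul mul (Δ x) (Δ y)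
  counit_one : ε one = 1
  counit_mul : ∀ x y : V, ε (mul x y) = ε x * ε y

/-!
By the counit, `c·c` has `c`-coordinate `1` and `c·s`, `s·c`, `s·s` have `c`-coordinate `0`.
Comparing `s ⊗ s`-coefficients in `Δ 1 = 1 ⊗ 1` shows that the `s`-coordinate `b` of the unit
satisfies `b² = -1`, so in characteristic 2 the unit is `c + s`; unitality then expresses `c·s`,
`s·c` and `s·s` through `λ`, the `s`-coordinate of `c·c`. Conversely, for every `λ` the bilinear
extension of this table satisfies all bialgebra axioms, which is checked in coordinates.
-/

theorem BialgebraStructure.ext {k V : Type*} [CommRing k] [AddCommGroup V] [Module k V]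
    {Δ : V →ₗ[k] V ⊗[k] V} {ε : V →ₗ[k] k} {B₁ B₂ : BialgebraStructure k V Δ ε}
    (h : B₁.mul = B₂.mul) : B₁ = B₂ := by
  have h_one : B₁.one = B₂.one := by
    calc B₁.one = B₂.mul B₁.one B₂.one := by rw [B₂.mul_one]
      _ = B₂.one := by rw [← h, B₁.one_mul]
  cases B₁; cases B₂
  cases h; cases h_one
  rfl

section Trigonometric

variable {k : Type*} [Field k]

theorem trigComul_apply (x : k × k) :
    trigComul k x = x.1 • (trigC k ⊗ₜ trigC k - trigS k ⊗ₜ trigS k) +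
      x.2 • (trigS k ⊗ₜ trigC k + trigC k ⊗ₜ trigS k) := by
  simp [trigComul]

theorem snd_sq_eq_neg_fst_of_trigComul_eq_tmul {x : k × k} (h : trigComul k x = x ⊗ₜ x) :
    x.2 ^ 2 = -x.1 := by
  let coeffSS : (k × k) ⊗[k] (k × k) →ₗ[k] k :=
    LinearMap.mul' k k ∘ₗ TensorProduct.map (LinearMap.snd k k k) (LinearMap.snd k k k)
  have := congrArg coeffSS h
  simp only [coeffSS, trigComul_apply, LinearMap.comp_apply, map_add, map_sub, map_smul, map_tmul,
    LinearMap.snd_apply, LinearMap.mul'_apply, smul_eq_mul, trigC, trigS] at this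
  linear_combination -this

namespace BialgebraStructure

variable (B : BialgebraStructure k (k × k) (trigComul k) (trigCounit k))

theorem one_eq_trigC_add_trigS [CharP k 2] : B.one = trigC k + trigS k := by
  have h_fst : B.one.1 = 1 := B.counit_one
  have h_snd : B.one.2 = 1 := CharTwo.sq_inj.mp <| by
    rw [snd_sq_eq_neg_fst_of_trigComul_eq_tmul B.comul_one, h_fst, CharTwo.neg_eq, one_pow]
  ext <;> simp [trigC, trigS, h_fst, h_snd]

theorem fst_mul (x y : k × k) : (B.mul x y).1 = x.1 * y.1 :=
  B.counit_mul x y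

def trigParam : k := (B.mul (trigC k) (trigC k)).2

theorem mul_table [CharP k 2] :
    B.mul (trigC k) (trigC k) = trigC k + B.trigParam • trigS k ∧
      B.mul (trigC k) (trigS k) = B.trigParam • trigS k ∧
      B.mul (trigS k) (trigC k) = B.trigParam • trigS k ∧
      B.mul (trigS k) (trigS k) = (B.trigParam + 1) • trigS k := by
  have h_left (x : k × k) : B.mul (trigC k) x + B.mul (trigS k) x = x := by
    rw [← LinearMap.add_apply, ← map_add, ← one_eq_trigC_add_trigS, B.one_mul]
  have h_right (x : k × k) : B.mul x (trigC k) + B.mul x (trigS k) = x := by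
    rw [← map_add, ← one_eq_trigC_add_trigS, B.mul_one]
  have neg_param : -(B.trigParam • trigS k) = B.trigParam • trigS k := by
    rw [← neg_smul, CharTwo.neg_eq]
  have hcc : B.mul (trigC k) (trigC k) = trigC k + B.trigParam • trigS k := by
    ext <;> simp [fst_mul, trigParam, trigC, trigS]
  have hcs : B.mul (trigC k) (trigS k) = B.trigParam • trigS k := by
    rw [eq_sub_of_add_eq' (h_right (trigC k)), hcc, sub_add_cancel_left, neg_param]
  have hsc : B.mul (trigS k) (trigC k) = B.trigParam • trigS k := by
    rw [eq_sub_of_add_eq' (h_left (trigC k)), hcc, sub_add_cancel_left, neg_param]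
  have hss : B.mul (trigS k) (trigS k) = (B.trigParam + 1) • trigS k := by
    rw [eq_sub_of_add_eq' (h_left (trigS k)), hcs, sub_eq_neg_add, neg_param, add_smul, one_smul]
  exact ⟨hcc, hcs, hsc, hss⟩

theorem ext_of_trigParam_eq [CharP k 2]
    {B₁ B₂ : BialgebraStructure k (k × k) (trigComul k) (trigCounit k)}
    (h : B₁.trigParam = B₂.trigParam) : B₁ = B₂ := by
  obtain ⟨cc₁, cs₁, sc₁, ss₁⟩ := B₁.mul_table
  obtain ⟨cc₂, cs₂, sc₂, ss₂⟩ := B₂.mul_table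
  refine ext <| LinearMap.ext_basis (Module.Basis.finTwoProd k) (Module.Basis.finTwoProd k) ?_
  simp only [Fin.forall_fin_two, Module.Basis.finTwoProd_zero, Module.Basis.finTwoProd_one,
    ← trigC.eq_1, ← trigS.eq_1]
  rw [cc₁, cs₁, sc₁, ss₁, cc₂, cs₂, sc₂, ss₂, h]
  exact ⟨⟨rfl, rfl⟩, rfl, rfl⟩

end BialgebraStructure

end Trigonometric

section Construction

variable {k : Type*} [Field k]

-- The bilinear extension of `c·c = c + l s`, `c·s = s·c = l s`, `s·s = (l + 1) s`.
def trigMul (l : k) : (k × k) →ₗ[k] (k × k) →ₗ[k] (k × k) :=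
  LinearMap.mk₂ k (fun x y => (x.1 * y.1, l * (x.1 + x.2) * (y.1 + y.2) + x.2 * y.2))
    (fun x x' y => by ext <;> simp only [Prod.fst_add, Prod.snd_add] <;> ring)
    (fun a x y => by ext <;> simp only [Prod.smul_fst, Prod.smul_snd, smul_eq_mul] <;> ring)
    (fun x y y' => by ext <;> simp only [Prod.fst_add, Prod.snd_add] <;> ring)
    (fun a x y => by ext <;> simp only [Prod.smul_fst, Prod.smul_snd, smul_eq_mul] <;> ring)

theorem trigMul_apply (l : k) (x y : k × k) :
    trigMul l x y = (x.1 * y.1, l * (x.1 + x.2) * (y.1 + y.2) + x.2 * y.2) := rfl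

variable [CharP k 2]

theorem trigComul_trigMul (l : k) (x y : k × k) : trigComul k (trigMul l x y) =
      TensorProduct.map₂ (trigMul l) (trigMul l) (trigComul k x) (trigComul k y) := by
  have h2 : (2 : k) = 0 := CharTwo.two_eq_zero
  apply ((Module.Basis.finTwoProd k).tensorProduct (Module.Basis.finTwoProd k)).ext_elem
  simp only [Prod.forall, Fin.forall_fin_two, trigComul_apply, trigMul_apply, trigC, trigS,
    map_add, map_sub, map_smul, map₂_apply_tmul, map_tmul, LinearMap.add_apply, LinearMap.sub_apply,
    LinearMap.smul_apply, Finsupp.coe_add, Finsupp.coe_sub, Finsupp.coe_smul, Pi.add_apply,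
    Pi.sub_apply, Pi.smul_apply, Module.Basis.tensorProduct_repr_tmul_apply,
    Module.Basis.coe_finTwoProd_repr, Matrix.cons_val_zero, Matrix.cons_val_one,
    Matrix.cons_val_fin_one, smul_eq_mul]
  refine ⟨⟨by ring, by ring⟩, by ring, ?_⟩
  linear_combination (-(l + 1) * x.1 * y.1 + l * x.1 * y.2 + l * x.2 * y.1 -
    (2 * l ^ 2 + l) * x.2 * y.2) * h2

def trigBialgebra (l : k) : BialgebraStructure k (k × k) (trigComul k) (trigCounit k) where
  mul := trigMul l
  one := trigC k + trigS k
  mul_assoc x y z := by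
    have h2 : (2 : k) = 0 := CharTwo.two_eq_zero
    ext
    · simp only [trigMul_apply]; ring
    · simp only [trigMul_apply]
      linear_combination l * (x.1 * y.1 * z.2 - x.2 * y.1 * z.1) * h2
  one_mul x := by
    have h2 : (2 : k) = 0 := CharTwo.two_eq_zero
    ext
    · simp only [trigMul_apply, trigC, trigS, Prod.fst_add, Prod.snd_add]; ring
    · simp only [trigMul_apply, trigC, trigS, Prod.fst_add, Prod.snd_add]
      linear_combination l * (x.1 + x.2) * h2
  mul_one x := by
    have h2 : (2 : k) = 0 := CharTwo.two_eq_zero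
    ext
    · simp only [trigMul_apply, trigC, trigS, Prod.fst_add, Prod.snd_add]; ring
    · simp only [trigMul_apply, trigC, trigS, Prod.fst_add, Prod.snd_add]
      linear_combination l * (x.1 + x.2) * h2
  comul_one := by
    have h_fst : (trigC k + trigS k).1 = 1 := by simp [trigC, trigS]
    have h_snd : (trigC k + trigS k).2 = 1 := by simp [trigC, trigS]
    have h_neg : -(trigS k ⊗ₜ[k] trigS k) = trigS k ⊗ₜ[k] trigS k := by
      rw [← neg_one_smul k, CharTwo.neg_eq, one_smul]
    rw [trigComul_apply, h_fst, h_snd, one_smul, one_smul, sub_eq_add_neg, h_neg, add_tmul,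
      tmul_add, tmul_add]
    abel
  comul_mul := trigComul_trigMul l
  counit_one := by simp [trigCounit, trigC, trigS]
  counit_mul x y := rfl

theorem trigParam_trigBialgebra (l : k) : (trigBialgebra l).trigParam = l := by
  simp [BialgebraStructure.trigParam, trigBialgebra, trigMul_apply, trigC]

end Construction

def trigBialgebraEquiv (k : Type*) [Field k] [CharP k 2] :
    BialgebraStructure k (k × k) (trigComul k) (trigCounit k) ≃ k where
  toFun := BialgebraStructure.trigParam
  invFun := trigBialgebra
  left_inv B := BialgebraStructure.ext_of_trigParam_eq (trigParam_trigBialgebra B.trigParam)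
  right_inv := trigParam_trigBialgebra

/-- In characteristic 2, every bialgebra structure on the trigonometric
coalgebra has multiplication table `c² = c + l s`, `cs = sc = l s`,
`s² = (l+1) s` for a unique `l ∈ k`; this sets up a bijection between
bialgebra structures on `C_k` and elements of `k`. -/
theorem trig_bialgebras_char_two_equiv (k : Type*) [Field k] [CharP k 2] :
    ∃ e : BialgebraStructure k (k × k) (trigComul k) (trigCounit k) ≃ k,
      ∀ B : BialgebraStructure k (k × k) (trigComul k) (trigCounit k),
        B.mul (trigC k) (trigC k) = trigC k + e B • trigS k ∧
        B.mul (trigC k) (trigS k) = e B • trigS k ∧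
        B.mul (trigS k) (trigC k) = e B • trigS k ∧
        B.mul (trigS k) (trigS k) = (e B + 1) • trigS k :=
  ⟨trigBialgebraEquiv k, fun B => B.mul_table⟩
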